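/- arXiv:1808.07222 — 8 statements merged into one kernel-verified Lean document; each statement's English description precedes it below -/
import Mathlib

section
/- Let W be a d-dimensional linear subspace of ℝ^n. Then the number of vectors in W all of whose coordinates are ±1 is at most 2^d. -/
theorem stmt_0 (n d : ℕ) (W : Submodule ℝ (Fin n → ℝ))
    (hW : Module.finrank ℝ W = d) :
    Set.ncard {x : Fin n → ℝ | x ∈ W ∧ ∀ i, x i = 1 ∨ x i = -1} ≤ 2 ^ d := by
  classical
  set S : Set (Fin n → ℝ) := {x : Fin n → ℝ | x ∈ W ∧ ∀ i, x i = 1 ∨ x i = -1} with hS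
  -- coordinate functionals on W
  set f : Fin n → Module.Dual ℝ W := fun i => (LinearMap.proj i).comp W.subtype with hf
  set Φ : Submodule ℝ (Module.Dual ℝ W) := Submodule.span ℝ (Set.range f) with hΦ
  have hbot : Φ.dualCoannihilator = ⊥ := by
    rw [eq_bot_iff]
    intro w hw
    rw [Submodule.mem_dualCoannihilator] at hw
    have hco : ∀ i, (w : Fin n → ℝ) i = 0 := by
      intro i
      have := hw (f i) (Submodule.subset_span ⟨i, rfl⟩)
      simpa [hf] using this
    have : w = 0 := by
      ext i; exact hco i
    simp [this]
  have hΦtop : Module.finrank ℝ Φ = d := by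
    have h := Subspace.finrank_add_finrank_dualCoannihilator_eq Φ
    rw [hbot, hW] at h
    simpa using h
  obtain ⟨T, hTsub, hTspan, hTli⟩ := exists_linearIndependent ℝ (Set.range f)
  have hTfin : T.Finite := hTli.setFinite
  have hTfintype : Fintype T := hTfin.fintype
  have hTcard : T.toFinset.card = d := by
    have := finrank_span_set_eq_card (s := T) hTli
    rw [hTspan, ← hΦ, hΦtop] at this
    omega
  -- injection from S into T → Bool
  have key : ∀ x : S, (x : Fin n → ℝ) ∈ W := fun x => x.2.1
  let g : S → (T → Bool) := fun x φ => decide ((φ : Module.Dual ℝ W) ⟨x, x.2.1⟩ = 1)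
  have hginj : Function.Injective g := by
    intro x y hxy
    have hval : ∀ φ ∈ T, φ (⟨x, x.2.1⟩ : W) = φ (⟨y, y.2.1⟩ : W) := by
      intro φ hφ
      obtain ⟨i, rfl⟩ := hTsub hφ
      have hx1 : f i (⟨x, x.2.1⟩ : W) = (x : Fin n → ℝ) i := rfl
      have hy1 : f i (⟨y, y.2.1⟩ : W) = (y : Fin n → ℝ) i := rfl
      have hgb : g x ⟨f i, hφ⟩ = g y ⟨f i, hφ⟩ := by rw [hxy]
      simp only [g, decide_eq_decide] at hgb
      rw [hx1, hy1] at hgb ⊢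
      rcases x.2.2 i with hxi | hxi <;> rcases y.2.2 i with hyi | hyi <;>
        simp_all
    have hmem : ((⟨x, x.2.1⟩ : W) - ⟨y, y.2.1⟩) ∈ Φ.dualCoannihilator := by
      rw [Submodule.mem_dualCoannihilator]
      intro φ hφ
      rw [hΦ, ← hTspan] at hφ
      induction hφ using Submodule.span_induction with
      | mem ψ hψ => rw [map_sub, hval ψ hψ, sub_self]
      | zero => simp
      | add ψ χ _ _ h1 h2 => simp [h1, h2]
      | smul c ψ _ h1 => simp [h1]
    rw [hbot, Submodule.mem_bot, sub_eq_zero] at hmem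
    have hv : (x : Fin n → ℝ) = (y : Fin n → ℝ) :=
      congrArg (fun z : W => (z : Fin n → ℝ)) hmem
    exact Subtype.ext hv
  have hSfin : Finite S := Finite.of_injective g hginj
  have h1 : Nat.card S ≤ Nat.card (T → Bool) := Nat.card_le_card_of_injective g hginj
  have h2 : Nat.card (T → Bool) = 2 ^ d := by
    rw [Nat.card_fun, Nat.card_eq_fintype_card (α := Bool), Nat.card_eq_fintype_card,
      ← Set.toFinset_card, hTcard]
    simp
  rw [← Nat.card_coe_set_eq, ← h2]
  exact h1
end

section
/- Every Hadamard matrix of order n > 2 has order divisible by 4. -/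
theorem stmt_1 (n : ℕ) (hn : 2 < n) (H : Matrix (Fin n) (Fin n) ℝ)
    (hent : ∀ i j, H i j = 1 ∨ H i j = -1)
    (horth : H * H.transpose = (n : ℝ) • 1) :
    4 ∣ n := by
  set i0 : Fin n := ⟨0, by omega⟩ with hi0
  set i1 : Fin n := ⟨1, by omega⟩ with hi1
  set i2 : Fin n := ⟨2, by omega⟩ with hi2
  have key : ∀ i k : Fin n, i ≠ k → ∑ j, H i j * H k j = 0 := by
    intro i k hik
    have h := congrFun (congrFun horth i) k
    simpa [Matrix.mul_apply, Matrix.transpose_apply, Matrix.smul_apply,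
      Matrix.one_apply, hik] using h
  set G : Fin n → Fin n → ℤ := fun i j => if H i j = 1 then 1 else -1 with hGdef
  have hG : ∀ i j, (G i j : ℝ) = H i j := by
    intro i j
    rcases hent i j with h | h
    · simp [hGdef, h]
    · have : H i j ≠ 1 := by rw [h]; norm_num
      simp [hGdef, this, h]
      intro hc; exact absurd hc (by norm_num)
  have hGval : ∀ i j, G i j = 1 ∨ G i j = -1 := by
    intro i j
    by_cases h : H i j = 1 <;> simp [hGdef, h]
  have hne01 : i0 ≠ i1 := by simp [hi0, hi1, Fin.ext_iff]
  have hne02 : i0 ≠ i2 := by simp [hi0, hi2, Fin.ext_iff]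
  have hne12 : i1 ≠ i2 := by simp [hi1, hi2, Fin.ext_iff]
  have hsumR : ∑ j, ((G i0 j : ℝ) + G i1 j) * ((G i0 j : ℝ) + G i2 j) = (n : ℝ) := by
    have e : ∀ j, ((G i0 j : ℝ) + G i1 j) * ((G i0 j : ℝ) + G i2 j) =
        H i0 j * H i0 j + H i0 j * H i2 j + H i1 j * H i0 j + H i1 j * H i2 j := by
      intro j; rw [hG, hG, hG]; ring
    rw [Finset.sum_congr rfl fun j _ => e j]
    rw [Finset.sum_add_distrib, Finset.sum_add_distrib, Finset.sum_add_distrib]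
    rw [key i0 i2 hne02, key i1 i0 hne01.symm, key i1 i2 hne12]
    have : ∑ j, H i0 j * H i0 j = (n : ℝ) := by
      have : ∀ j : Fin n, H i0 j * H i0 j = 1 := by
        intro j; rcases hent i0 j with h | h <;> rw [h] <;> norm_num
      rw [Finset.sum_congr rfl fun j _ => this j]
      simp
    rw [this]; ring
  have hsumZ : ∑ j, (G i0 j + G i1 j) * (G i0 j + G i2 j) = (n : ℤ) := by
    have := hsumR
    push_cast at this
    exact_mod_cast this
  have hdvd : (4 : ℤ) ∣ (n : ℤ) := by
    rw [← hsumZ]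
    apply Finset.dvd_sum
    intro j _
    rcases hGval i0 j with h0 | h0 <;> rcases hGval i1 j with h1 | h1 <;>
      rcases hGval i2 j with h2 | h2 <;> rw [h0, h1, h2] <;> decide
  exact_mod_cast hdvd
end

section
/- The number of n×n Hadamard matrices is at most 2^(n(n+1)/2). -/
/-!
Build a Hadamard matrix row by row. The first `k` rows `N` satisfy `N Nᵀ = n • 1`, so `N` has
rank `k` and the next row is a `±1` vector in `ker N`, a subspace of dimension `n - k`. A
subspace of dimension `d` contains at most `2 ^ d` vectors with `±1` entries, because its vectors
are determined by `d` suitably chosen coordinates (Odlyzko's lemma). Hence there are at most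
`∏_{k < n} 2 ^ (n - k) = 2 ^ (n (n + 1) / 2)` Hadamard matrices.
-/

open Matrix Module Finset

namespace Submodule

variable {K ι : Type*} [Field K] [Fintype ι]

theorem exists_finset_card_le_finrank_eq_zero_of_forall (W : Submodule K (ι → K)) :
    ∃ S : Finset ι, #S ≤ finrank K W ∧ ∀ x ∈ W, (∀ j ∈ S, x j = 0) → x = 0 := by
  classical
  -- Coordinates whose restrictions to `W` are a basis of the span of all coordinate functionals.
  let coord : ι → Dual K W := fun j => (LinearMap.proj j).comp W.subtype
  obtain ⟨κ, a, ha, hspan, hli⟩ := exists_linearIndependent' K coord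
  have : Fintype κ := Fintype.ofInjective a ha
  refine ⟨univ.map ⟨a, ha⟩, ?_, fun x hx hS => funext fun l => ?_⟩
  · rw [card_map, card_univ, ← Subspace.dual_finrank_eq]
    exact hli.fintype_card_le_finrank
  · have hker : span K (Set.range coord) ≤ LinearMap.ker (Dual.eval K W ⟨x, hx⟩) := by
      rw [← hspan, span_le]
      rintro _ ⟨i, rfl⟩
      exact hS (a i) (Finset.mem_map_of_mem _ (mem_univ i))
    exact hker (subset_span ⟨l, rfl⟩)

theorem ncard_setOf_mem_forall_mem_le (W : Submodule K (ι → K)) {A : Finset K}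
    (hA : A.Nonempty) :
    {x | x ∈ W ∧ ∀ j, x j ∈ A}.ncard ≤ #A ^ finrank K W := by
  classical
  obtain ⟨S, hS, hzero⟩ := W.exists_finset_card_le_finrank_eq_zero_of_forall
  calc {x | x ∈ W ∧ ∀ j, x j ∈ A}.ncard
      ≤ (Fintype.piFinset fun _ : S => A : Set (S → K)).ncard := by
        refine Set.ncard_le_ncard_of_injOn (fun x j => x j) ?_ ?_
        · intro x hx
          simp [hx.2]
        · intro x hx y hy hxy
          refine sub_eq_zero.1 (hzero _ (W.sub_mem hx.1 hy.1) fun j hj => ?_)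
          simpa [sub_eq_zero] using congrFun hxy ⟨j, hj⟩
    _ = #A ^ #S := by rw [Set.ncard_coe_finset]; simp
    _ ≤ #A ^ finrank K W := Nat.pow_le_pow_right hA.card_pos hS

end Submodule

theorem Set.ncard_le_mul_ncard_of_mapsTo {α β : Type*} {s : Set α} {t : Set β} {f : α → β}
    (hs : s.Finite) (ht : t.Finite) (hf : Set.MapsTo f s t) (m : ℕ)
    (hm : ∀ b ∈ t, {a | a ∈ s ∧ f a = b}.ncard ≤ m) : s.ncard ≤ m * t.ncard := by
  classical
  rw [Set.ncard_eq_toFinset_card s hs, Set.ncard_eq_toFinset_card t ht]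
  refine card_le_mul_card_image_of_maps_to (fun a ha => by simpa using hf (by simpa using ha)) m
    fun b hb => ?_
  rw [Set.Finite.mem_toFinset] at hb
  convert hm b hb
  rw [← Set.ncard_coe_finset]
  congr 1
  ext a
  simp

theorem Finset.sum_range_sub_self (n : ℕ) : ∑ i ∈ range n, (n - i) = n * (n + 1) / 2 := by
  refine Nat.div_eq_of_eq_mul_left two_pos ?_ |>.symm
  induction n with
  | zero => simp
  | succ n ih =>
    simp only [sum_range_succ', Nat.add_sub_add_right, Nat.sub_zero, add_mul, ← ih]
    ring

def partialHadamard (k n : ℕ) : Set (Matrix (Fin k) (Fin n) ℝ) :=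
  {M | (∀ i j, M i j = 1 ∨ M i j = -1) ∧ M * Mᵀ = (n : ℝ) • 1}

namespace partialHadamard

variable {k n : ℕ}

theorem finite (k n : ℕ) : (partialHadamard k n).Finite := by
  refine (Set.Finite.pi fun _ => Set.Finite.pi fun _ =>
    (Set.finite_singleton (-1 : ℝ)).insert 1).subset fun M hM i _ j _ => ?_
  simpa using hM.1 i j

theorem rank_eq {M : Matrix (Fin k) (Fin n) ℝ} (hM : M ∈ partialHadamard k n) (hn : n ≠ 0) :
    M.rank = k := by
  rw [← rank_self_mul_transpose, hM.2,
    rank_smul_of_mem_nonZeroDivisors _ (mem_nonZeroDivisors_of_ne_zero (by exact_mod_cast hn)),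
    rank_one, Fintype.card_fin]

theorem finrank_ker_mulVecLin_le {M : Matrix (Fin k) (Fin n) ℝ} (hM : M ∈ partialHadamard k n) :
    finrank ℝ (LinearMap.ker M.mulVecLin) ≤ n - k := by
  rcases eq_or_ne n 0 with rfl | hn
  · simpa using Submodule.finrank_le (LinearMap.ker M.mulVecLin)
  · have := LinearMap.finrank_range_add_finrank_ker M.mulVecLin
    rw [finrank_fin_fun] at this
    have := rank_eq hM hn
    unfold Matrix.rank at this
    omega

theorem submatrix_castSucc_mem {M : Matrix (Fin (k + 1)) (Fin n) ℝ}
    (hM : M ∈ partialHadamard (k + 1) n) :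
    M.submatrix Fin.castSucc id ∈ partialHadamard k n := by
  refine ⟨fun i j => hM.1 _ _, ?_⟩
  rw [transpose_submatrix, ← submatrix_mul _ _ _ _ _ Function.bijective_id, hM.2]
  ext i j
  simp [one_apply]

theorem submatrix_castSucc_mulVec_last {M : Matrix (Fin (k + 1)) (Fin n) ℝ}
    (hM : M ∈ partialHadamard (k + 1) n) :
    M.submatrix Fin.castSucc id *ᵥ M (Fin.last k) = 0 := by
  funext i
  have := congrFun (congrFun hM.2 i.castSucc) (Fin.last k)
  simpa [mul_apply, dotProduct, mulVec, Fin.castSucc_ne_last, mul_comm] using this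

theorem ncard_succ_le (k n : ℕ) :
    (partialHadamard (k + 1) n).ncard ≤ 2 ^ (n - k) * (partialHadamard k n).ncard := by
  refine Set.ncard_le_mul_ncard_of_mapsTo (finite _ _) (finite _ _)
    (fun M hM => submatrix_castSucc_mem hM) _ fun N hN => ?_
  calc {M | M ∈ partialHadamard (k + 1) n ∧ M.submatrix Fin.castSucc id = N}.ncard
      ≤ {v | v ∈ LinearMap.ker N.mulVecLin ∧
          ∀ j, v j ∈ ({1, -1} : Finset ℝ)}.ncard := by
        refine Set.ncard_le_ncard_of_injOn (fun M => M (Fin.last k)) ?_ ?_ ?_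
        · rintro M ⟨hM, rfl⟩
          exact ⟨submatrix_castSucc_mulVec_last hM, by simpa using hM.1 (Fin.last k)⟩
        · rintro M ⟨-, hMN⟩ M' ⟨-, hM'N⟩ hlast
          funext i
          induction i using Fin.lastCases with
          | last => exact hlast
          | cast i => exact congrFun (hMN.trans hM'N.symm) i
        · exact (Set.Finite.pi fun _ => finite_toSet _).subset fun v hv j _ => hv.2 j
    _ ≤ #({1, -1} : Finset ℝ) ^ finrank ℝ (LinearMap.ker N.mulVecLin) :=
        Submodule.ncard_setOf_mem_forall_mem_le _ (insert_nonempty _ _)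
    _ ≤ 2 ^ (n - k) :=
        (Nat.pow_le_pow_left card_le_two _).trans
          (Nat.pow_le_pow_right two_pos (finrank_ker_mulVecLin_le hN))

theorem ncard_le (k n : ℕ) : (partialHadamard k n).ncard ≤ 2 ^ ∑ i ∈ range k, (n - i) := by
  induction k with
  | zero => simpa using Set.ncard_le_one_of_subsingleton (partialHadamard 0 n)
  | succ k ih =>
    rw [sum_range_succ, pow_add, mul_comm]
    exact (ncard_succ_le k n).trans (Nat.mul_le_mul_left _ ih)

end partialHadamard

theorem stmt_2 (n : ℕ) :
    Set.ncard {H : Matrix (Fin n) (Fin n) ℝ |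
      (∀ i j, H i j = 1 ∨ H i j = -1) ∧ H * H.transpose = (n : ℝ) • 1}
      ≤ 2 ^ (n * (n + 1) / 2) :=
  sum_range_sub_self n ▸ partialHadamard.ncard_le n n
end

section
/- Let H be a k×n matrix with entries in {±1} whose rows are pairwise orthogonal (so H * Hᵀ = n • I_k). Then the sum over all k×k submatrices A of H of det(A)² equals n^k; consequently, since each such determinant squared is at most k^k, the number of k×k submatrices of H with nonzero determinant is at least (n/k)^k. -/
/-!
Expanding `det (A * B)` multilinearly in the rows of `A` gives a sum over maps `φ : Fin k → ι`.
The terms with `φ` not injective vanish, and writing an injective `φ` as the increasing enumeration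
of its image composed with a permutation regroups the rest into `∑ s, det A_s * det B_s`
(Cauchy–Binet). For `H * Hᵀ = n • 1` this gives `∑ s, det (H_s) ^ 2 = n ^ k`. Each term is
`det (H_s * H_sᵀ) ≤ (tr (H_s * H_sᵀ) / k) ^ k = k ^ k` by AM–GM on the eigenvalues, so at least
`n ^ k / k ^ k` of the terms are nonzero.
-/

open Matrix Finset Equiv

namespace Finset

theorem image_univ_orderEmbOfFin_comp_perm {ι : Type*} [LinearOrder ι] {k : ℕ}
    (s : Finset ι) (hs : s.card = k) (σ : Perm (Fin k)) :
    univ.image (s.orderEmbOfFin hs ∘ σ) = s := by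
  rw [← image_image, image_univ_equiv, image_orderEmbOfFin_univ]

theorem sum_injective_eq_sum_orderEmbOfFin_comp_perm {ι M : Type*} [Fintype ι] [LinearOrder ι]
    [AddCommMonoid M] (k : ℕ) (f : (Fin k → ι) → M) :
    ∑ φ with Function.Injective φ, f φ =
      ∑ s : {s : Finset ι // s.card = k}, ∑ σ : Perm (Fin k), f (s.1.orderEmbOfFin s.2 ∘ σ) := by
  rw [← Fintype.sum_prod_type']
  symm
  refine sum_bij (fun p _ => p.1.1.orderEmbOfFin p.1.2 ∘ p.2) ?_ ?_ ?_ fun _ _ => rfl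
  · rintro ⟨s, σ⟩ -
    simpa using (s.1.orderEmbOfFin s.2).injective.comp σ.injective
  · rintro ⟨⟨s, hs⟩, σ⟩ - ⟨⟨t, ht⟩, τ⟩ - h
    obtain rfl : s = t := by
      rw [← s.image_univ_orderEmbOfFin_comp_perm hs σ, ← t.image_univ_orderEmbOfFin_comp_perm ht τ]
      exact congrArg (univ.image ·) h
    have hστ : ⇑σ = ⇑τ := (s.orderEmbOfFin hs).injective.comp_left h
    simp [DFunLike.coe_injective hστ]
  · intro φ hφ
    rw [mem_filter] at hφ
    set s := univ.image φ
    have hs : s.card = k := by simp [s, card_image_of_injective _ hφ.2]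
    let τ (i : Fin k) : Fin k := (s.orderIsoOfFin hs).symm ⟨φ i, mem_image_of_mem _ (mem_univ i)⟩
    have hτ : s.orderEmbOfFin hs ∘ τ = φ := by
      ext i; simp [τ, ← coe_orderIsoOfFin_apply]
    have hτinj : Function.Injective τ := Function.Injective.of_comp (hτ ▸ hφ.2)
    exact ⟨(⟨s, hs⟩, Equiv.ofBijective τ (Finite.injective_iff_bijective.mp hτinj)), mem_univ _, hτ⟩

theorem prod_le_sum_div_card_pow {ι : Type*} (s : Finset ι) (z : ι → ℝ)
    (hz : ∀ i ∈ s, 0 ≤ z i) : ∏ i ∈ s, z i ≤ ((∑ i ∈ s, z i) / #s) ^ #s := by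
  rcases s.eq_empty_or_nonempty with rfl | hne
  · simp
  have hcard : (0 : ℝ) < #s := by exact_mod_cast hne.card_pos
  have hamgm := Real.geom_mean_le_arith_mean_weighted s (fun _ => (#s : ℝ)⁻¹) z
    (fun _ _ => by positivity) (by simp [hcard.ne']) hz
  rw [Real.finsetProd_rpow s z hz, ← mul_sum, inv_mul_eq_div] at hamgm
  calc ∏ i ∈ s, z i = ((∏ i ∈ s, z i) ^ (#s : ℝ)⁻¹) ^ #s := by
        rw [← Real.rpow_natCast, ← Real.rpow_mul (prod_nonneg hz), inv_mul_cancel₀ hcard.ne',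
          Real.rpow_one]
    _ ≤ _ := by gcongr; exact Real.rpow_nonneg (prod_nonneg hz) _

theorem sum_le_card_filter_ne_zero_nsmul {α M : Type*} [AddCommMonoid M] [PartialOrder M]
    [IsOrderedAddMonoid M] [DecidableEq M] (s : Finset α) (f : α → M) {C : M}
    (hf : ∀ x ∈ s, f x ≤ C) : ∑ x ∈ s, f x ≤ #{x ∈ s | f x ≠ 0} • C := by
  rw [← sum_filter_ne_zero]
  exact sum_le_card_nsmul _ _ _ fun x hx => hf x (mem_filter.1 hx).1

end Finset

namespace Matrix

section CauchyBinet

variable {R m ι : Type*} [CommRing R] [Fintype m] [DecidableEq m]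

theorem sum_perm_prod_mul_det_submatrix_comp (A : Matrix m ι R) (B : Matrix ι m R) (e : m → ι) :
    ∑ σ : Perm m, (∏ i, A i (e (σ i))) * (B.submatrix (e ∘ σ) id).det =
      (A.submatrix id e).det * (B.submatrix e id).det := by
  have hperm (σ : Perm m) : (B.submatrix (e ∘ σ) id).det = σ.sign * (B.submatrix e id).det := by
    rw [← det_permute]; rfl
  simp only [hperm, ← det_transpose (A.submatrix id e), det_apply', sum_mul]
  refine sum_congr rfl fun σ _ => ?_
  simp only [transpose_apply, submatrix_apply, id]
  ring

variable [Fintype ι]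

theorem det_mul_eq_sum_prod_mul_det_submatrix (A : Matrix m ι R) (B : Matrix ι m R) :
    (A * B).det = ∑ φ : m → ι, (∏ i, A i (φ i)) * (B.submatrix φ id).det := by
  have hrows : A * B = of fun i => ∑ r, A i r • B r := by
    ext i j; simp [mul_apply]
  rw [hrows]
  change (detRowAlternating : (m → R) [⋀^m]→ₗ[R] R).toMultilinearMap
    (fun i => ∑ r, A i r • B r) = _
  rw [MultilinearMap.map_sum]
  refine sum_congr rfl fun φ _ => ?_
  rw [MultilinearMap.map_smul_univ, smul_eq_mul]
  rfl

theorem det_mul_eq_sum_injective_prod_mul_det_submatrix [DecidableEq ι]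
    (A : Matrix m ι R) (B : Matrix ι m R) :
    (A * B).det = ∑ φ with Function.Injective φ, (∏ i, A i (φ i)) * (B.submatrix φ id).det := by
  rw [det_mul_eq_sum_prod_mul_det_submatrix, sum_filter_of_ne]
  intro φ _ hφ
  contrapose! hφ
  obtain ⟨i, j, hij, hne⟩ := Function.not_injective_iff.mp hφ
  rw [det_zero_of_row_eq hne (by ext; simp [hij]), mul_zero]

/-- **Cauchy–Binet formula** -/
theorem det_mul_eq_sum_det_submatrix_mul_det_submatrix [LinearOrder ι] {k : ℕ}
    (A : Matrix (Fin k) ι R) (B : Matrix ι (Fin k) R) :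
    (A * B).det = ∑ s : {s : Finset ι // s.card = k},
      (A.submatrix id (s.1.orderEmbOfFin s.2)).det *
        (B.submatrix (s.1.orderEmbOfFin s.2) id).det := by
  simp only [det_mul_eq_sum_injective_prod_mul_det_submatrix,
    sum_injective_eq_sum_orderEmbOfFin_comp_perm, sum_perm_prod_mul_det_submatrix_comp,
    Function.comp_apply]

end CauchyBinet

variable {n : Type*} [Fintype n] [DecidableEq n]

theorem PosSemidef.det_le_trace_div_card_pow {M : Matrix n n ℝ} (hM : M.PosSemidef) :
    M.det ≤ (M.trace / Fintype.card n) ^ Fintype.card n := by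
  have := prod_le_sum_div_card_pow univ hM.1.eigenvalues fun i _ => hM.eigenvalues_nonneg i
  simpa [hM.1.det_eq_prod_eigenvalues, hM.1.trace_eq_sum_eigenvalues] using this

theorem det_sq_le_card_pow_card_of_abs_le_one (A : Matrix n n ℝ) (hA : ∀ i j, |A i j| ≤ 1) :
    A.det ^ 2 ≤ (Fintype.card n : ℝ) ^ Fintype.card n := by
  have hM : (A * Aᵀ).PosSemidef := by simpa using posSemidef_self_mul_conjTranspose A
  have htrace : (A * Aᵀ).trace ≤ Fintype.card n * Fintype.card n := by
    calc (A * Aᵀ).trace = ∑ i, ∑ j, |A i j| ^ 2 := by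
          simp [trace, mul_apply, sq]
      _ ≤ ∑ _i : n, ∑ _j : n, 1 := by
          gcongr with i _ j; exact pow_le_one₀ (abs_nonneg _) (hA i j)
      _ = _ := by simp
  calc A.det ^ 2 = (A * Aᵀ).det := by rw [det_mul, det_transpose, sq]
    _ ≤ ((A * Aᵀ).trace / Fintype.card n) ^ Fintype.card n := hM.det_le_trace_div_card_pow
    _ ≤ _ := by
      gcongr
      · exact div_nonneg hM.trace_nonneg (Nat.cast_nonneg _)
      · exact div_le_of_le_mul₀ (Nat.cast_nonneg _) (Nat.cast_nonneg _) htrace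

end Matrix

theorem stmt_4_general (k n : ℕ) (H : Matrix (Fin k) (Fin n) ℝ)
    (hent : ∀ i j, H i j = 1 ∨ H i j = -1)
    (horth : H * H.transpose = (n : ℝ) • 1) :
    (∑ s : {s : Finset (Fin n) // s.card = k},
        ((H.submatrix id (fun j : Fin k => (s.1.orderIsoOfFin s.2 j : Fin n))).det) ^ 2
          = (n : ℝ) ^ k)
    ∧ ((n : ℝ) / k) ^ k ≤
        (Set.ncard {s : {s : Finset (Fin n) // s.card = k} |
          (H.submatrix id (fun j : Fin k => (s.1.orderIsoOfFin s.2 j : Fin n))).det ≠ 0} : ℝ) := by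
  simp only [coe_orderIsoOfFin_apply]
  have hsum : ∑ s : {s : Finset (Fin n) // s.card = k},
      (H.submatrix id (s.1.orderEmbOfFin s.2)).det ^ 2 = (n : ℝ) ^ k := by
    have := det_mul_eq_sum_det_submatrix_mul_det_submatrix H Hᵀ
    simpa [horth, ← transpose_submatrix, sq] using this.symm
  have hbound (s : {s : Finset (Fin n) // s.card = k}) :
      (H.submatrix id (s.1.orderEmbOfFin s.2)).det ^ 2 ≤ (k : ℝ) ^ k := by
    simpa using det_sq_le_card_pow_card_of_abs_le_one (H.submatrix id _) fun i j => by
      rcases hent i (s.1.orderEmbOfFin s.2 j) with h | h <;> simp [h]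
  have hcount := sum_le_card_filter_ne_zero_nsmul univ _ fun s _ => hbound s
  rw [hsum, nsmul_eq_mul] at hcount
  have hk : (0 : ℝ) < (k : ℝ) ^ k := by exact_mod_cast Nat.pow_self_pos
  rw [Set.ncard_eq_toFinset_card', Set.toFinset_ofPred, div_pow, div_le_iff₀ hk]
  exact ⟨hsum, by simpa using hcount⟩

theorem stmt_4 (k n : ℕ) (hkn : k ≤ n) (H : Matrix (Fin k) (Fin n) ℝ)
    (hent : ∀ i j, H i j = 1 ∨ H i j = -1)
    (horth : H * H.transpose = (n : ℝ) • 1) :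
    (∑ s : {s : Finset (Fin n) // s.card = k},
        ((H.submatrix id (fun j : Fin k => (s.1.orderIsoOfFin s.2 j : Fin n))).det) ^ 2
          = (n : ℝ) ^ k)
    ∧ ((n : ℝ) / k) ^ k ≤
        (Set.ncard {s : {s : Finset (Fin n) // s.card = k} |
          (H.submatrix id (fun j : Fin k => (s.1.orderIsoOfFin s.2 j : Fin n))).det ≠ 0} : ℝ) :=
  stmt_4_general k n H hent horth
end

section
/- Let a = (a₁,…,aₙ) be a vector in ℝ^n with all entries nonzero, and let ε₁,…,εₙ be independent Rademacher random variables (each ±1 with probability 1/2). Then for every c ∈ ℝ, the probability that ε₁a₁ + ⋯ + εₙaₙ = c is at most C(n, ⌊n/2⌋) / 2^n. -/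
/-!
Send a sign vector `ε` to the set `S` of coordinates with `0 < εᵢ aᵢ`. Then
`∑ εᵢ aᵢ = 2 ∑_{i ∈ S} |aᵢ| - ∑ |aᵢ|`, so the sign vectors hitting `c` go injectively to sets of
a fixed `|a|`-weight. As all weights `|aᵢ|` are positive, no such set contains another, and
Sperner's theorem bounds their number by `C(n, ⌊n/2⌋)`.
-/

open Finset

theorem Set.ncard_le_choose_of_isAntichain {α : Type*} [Fintype α] {𝒜 : Set (Finset α)}
    (h𝒜 : IsAntichain (· ⊆ ·) 𝒜) :
    𝒜.ncard ≤ (Fintype.card α).choose (Fintype.card α / 2) := by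
  classical
  rw [Set.ncard_eq_toFinset_card']
  exact IsAntichain.sperner (by simpa using h𝒜)

theorem isAntichain_setOf_sum_eq {ι : Type*} {w : ι → ℝ} (hw : ∀ i, 0 < w i) (t : ℝ) :
    IsAntichain (· ⊆ ·) {S : Finset ι | ∑ i ∈ S, w i = t} := by
  intro S hS T hT hne hST
  obtain ⟨i, hiT, hiS⟩ := exists_of_ssubset (hST.ssubset_of_ne hne)
  have hlt : ∑ i ∈ S, w i < ∑ i ∈ T, w i :=
    sum_lt_sum_of_subset hST hiT hiS (hw i) fun j _ _ => (hw j).le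
  exact hlt.ne (hS.trans hT.symm)

theorem sign_mul_eq_ite {e x : ℝ} (he : e = 1 ∨ e = -1) :
    e * x = if 0 < e * x then |x| else -|x| := by
  rcases he with rfl | rfl <;> split_ifs <;> simp only [one_mul, neg_one_mul] at * <;>
    cases abs_cases x <;> linarith

section SignVectors

variable {ι : Type*} [Fintype ι]

noncomputable def signAgreementSet (a ε : ι → ℝ) : Finset ι := {i | 0 < ε i * a i}

variable [DecidableEq ι]

theorem mul_eq_ite_mem_signAgreementSet {a ε : ι → ℝ} (hε : ∀ i, ε i = 1 ∨ ε i = -1) (i : ι) :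
    ε i * a i = if i ∈ signAgreementSet a ε then |a i| else -|a i| := by
  simpa [signAgreementSet] using sign_mul_eq_ite (x := a i) (hε i)

theorem sum_sign_mul_eq {a ε : ι → ℝ} (hε : ∀ i, ε i = 1 ∨ ε i = -1) :
    ∑ i, ε i * a i = 2 * ∑ i ∈ signAgreementSet a ε, |a i| - ∑ i, |a i| := by
  have hsplit := sum_add_sum_compl (signAgreementSet a ε) fun i => |a i|
  rw [sum_congr rfl fun i _ => mul_eq_ite_mem_signAgreementSet hε i, sum_ite, sum_neg_distrib,
    filter_mem_eq_inter, univ_inter, filter_not, filter_mem_eq_inter, univ_inter,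
    ← compl_eq_univ_sdiff]
  linarith

theorem injOn_signAgreementSet {a : ι → ℝ} (ha : ∀ i, a i ≠ 0) :
    Set.InjOn (signAgreementSet a) {ε : ι → ℝ | ∀ i, ε i = 1 ∨ ε i = -1} := by
  intro ε hε ε' hε' h
  funext i
  refine mul_right_cancel₀ (ha i) ?_
  rw [mul_eq_ite_mem_signAgreementSet hε, mul_eq_ite_mem_signAgreementSet hε', h]

end SignVectors

theorem stmt_5 (n : ℕ) (a : Fin n → ℝ) (ha : ∀ i, a i ≠ 0) (c : ℝ) :
    (Set.ncard {ε : Fin n → ℝ |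
        (∀ i, ε i = 1 ∨ ε i = -1) ∧ ∑ i, ε i * a i = c} : ℝ) / 2 ^ n
      ≤ (n.choose (n / 2) : ℝ) / 2 ^ n := by
  set E := {ε : Fin n → ℝ | (∀ i, ε i = 1 ∨ ε i = -1) ∧ ∑ i, ε i * a i = c}
  have hinj : Set.InjOn (signAgreementSet a) E :=
    (injOn_signAgreementSet ha).mono fun ε hε => hε.1
  have hweight : signAgreementSet a '' E ⊆
      {S | ∑ i ∈ S, |a i| = (c + ∑ i, |a i|) / 2} := by
    rintro _ ⟨ε, ⟨hε, hc⟩, rfl⟩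
    have := sum_sign_mul_eq (a := a) hε
    simp only [Set.mem_ofPred_eq]
    linarith
  have hanti : IsAntichain (· ⊆ ·) (signAgreementSet a '' E) :=
    (isAntichain_setOf_sum_eq (fun i => abs_pos.2 (ha i)) _).subset hweight
  have hcard : E.ncard ≤ n.choose (n / 2) := by
    rw [← hinj.ncard_image]
    simpa using Set.ncard_le_choose_of_isAntichain hanti
  exact div_le_div_of_nonneg_right (by exact_mod_cast hcard) (by positivity)
end

section
/- Let A be an m×n real matrix (m ≤ n) of rank r, and let X⁽¹⁾,…,X⁽ˡ⁾ be independent random vectors each uniformly distributed on {±1}^n. Then for every u ∈ ℝ^m, the probability that A X⁽¹⁾ + ⋯ + A X⁽ˡ⁾ = u is at most (2^{-ℓ} C(ℓ, ⌊ℓ/2⌋))^r. -/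
/-!
Choose a set `S` of `r` linearly independent columns of `A`. Writing `Y = X⁽¹⁾ + ⋯ + X⁽ˡ⁾`, the
equation `A Y = u` determines the coordinates `Y i`, `i ∈ S`, from the others. So once the `n - r`
rows of the sign matrix `(X⁽ʲ⁾ i)` indexed outside `S` are fixed, each row indexed by `i ∈ S` is a
sign vector of `{±1}^ℓ` with prescribed sum, and by Erdős' bound there are at most
`C(ℓ, ⌊ℓ/2⌋)` of these, as they correspond to the `k`-subsets of `Fin ℓ` for one fixed `k`.
-/

open Finset Matrix Module

theorem card_le_pow_card_of_agree_off {ι α β : Type*} [Fintype ι] [DecidableEq ι] [DecidableEq β]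
    {V : Finset α} {s : α → β} {M : ℕ} (hM : ∀ b, #{v ∈ V | s v = b} ≤ M) (S : Finset ι)
    {F : Finset (ι → α)} (g₀ : ι → α)
    (hF : ∀ g ∈ F, (∀ i, g i ∈ V ∧ s (g i) = s (g₀ i)) ∧ ∀ i ∉ S, g i = g₀ i) :
    #F ≤ M ^ #S := by
  calc #F ≤ #(Fintype.piFinset fun i : S => {v ∈ V | s v = s (g₀ i)}) := by
        refine card_le_card_of_injOn (fun g (i : S) => g i) (fun g hg => ?_)
          fun g hg g' hg' hgg' => funext fun i => ?_
        · simpa using fun i _ => (hF g hg).1 i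
        · by_cases hi : i ∈ S
          · exact congrFun hgg' ⟨i, hi⟩
          · rw [(hF g hg).2 i hi, (hF g' hg').2 i hi]
    _ ≤ M ^ #S := by
        rw [Fintype.card_piFinset]
        exact (prod_le_pow_card _ _ _ fun i _ => hM _).trans_eq (by simp)

theorem card_filter_piFinset_le_pow_mul_pow {ι α β : Type*} [Fintype ι] [DecidableEq ι]
    [DecidableEq α] [DecidableEq β] (V : Finset α) (s : α → β) {M : ℕ}
    (hM : ∀ b, #{v ∈ V | s v = b} ≤ M) (S : Finset ι) (P : (ι → β) → Prop) [DecidablePred P]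
    (hP : ∀ x y, P x → P y → (∀ i ∉ S, x i = y i) → x = y) :
    #{g ∈ Fintype.piFinset fun _ : ι => V | P fun i => s (g i)} ≤ M ^ #S * #V ^ #Sᶜ := by
  set G := {g ∈ Fintype.piFinset fun _ : ι => V | P fun i => s (g i)}
  have hmaps : ∀ g ∈ G, (fun i : ↥Sᶜ => g i) ∈ Fintype.piFinset fun _ : ↥Sᶜ => V := by
    intro g hg
    simp only [G, mem_filter, Fintype.mem_piFinset] at hg ⊢
    exact fun i => hg.1 i
  calc #G ≤ M ^ #S * #(Fintype.piFinset fun _ : ↥Sᶜ => V) := by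
        refine card_le_mul_card_image_of_maps_to hmaps _ fun w _ => ?_
        obtain hempty | ⟨g₀, hg₀⟩ := ({g ∈ G | (fun i : ↥Sᶜ => g i) = w}).eq_empty_or_nonempty
        · simp [hempty]
        refine card_le_pow_card_of_agree_off hM S g₀ fun g hg => ?_
        simp only [G, mem_filter, Fintype.mem_piFinset] at hg hg₀
        have hoff : ∀ i ∉ S, g i = g₀ i := fun i hi =>
          congrFun (hg.2.trans hg₀.2.symm) ⟨i, mem_compl.2 hi⟩
        have hsg := hP _ _ hg.1.2 hg₀.1.2 fun i hi => by rw [hoff i hi]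
        exact ⟨fun i => ⟨hg.1.1 i, congrFun hsg i⟩, hoff⟩
    _ = M ^ #S * #V ^ #Sᶜ := by simp

theorem sum_sign_eq_two_mul_card_sub {ι : Type*} [Fintype ι] {v : ι → ℝ}
    (hv : ∀ i, v i = 1 ∨ v i = -1) :
    ∑ i, v i = 2 * #{i | v i = 1} - Fintype.card ι := by
  have h : ∀ i, v i = 2 * (if v i = 1 then 1 else 0) - 1 := fun i => by
    rcases hv i with h | h <;> norm_num [h]
  rw [sum_congr rfl fun i _ => h i, sum_sub_distrib, ← mul_sum, sum_boole]
  simp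

theorem card_filter_sum_eq_le_choose {ι : Type*} [Fintype ι] [DecidableEq ι] (c : ℝ) :
    #{v ∈ Fintype.piFinset fun _ : ι => ({1, -1} : Finset ℝ) | ∑ i, v i = c}
      ≤ (Fintype.card ι).choose (Fintype.card ι / 2) := by
  have hsign : ∀ v ∈ Fintype.piFinset fun _ : ι => ({1, -1} : Finset ℝ),
      ∀ i, v i = 1 ∨ v i = -1 := by
    simp
  calc _ ≤ #(univ.powersetCard ⌊(c + Fintype.card ι) / 2⌋₊) := by
        refine card_le_card_of_injOn (fun v => ({i | v i = 1} : Finset ι)) (fun v hv => ?_)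
          fun v hv w hw hvw => ?_
        · simp only [coe_filter] at hv
          rw [mem_coe, mem_powersetCard, ← hv.2, sum_sign_eq_two_mul_card_sub (hsign v hv.1)]
          simp
        · simp only [coe_filter] at hv hw
          funext i
          have hi : v i = 1 ↔ w i = 1 := by simpa using congrArg (i ∈ ·) hvw
          rcases hsign v hv.1 i with h | h <;> rcases hsign w hw.1 i with h' | h' <;>
            simp_all
    _ ≤ _ := by
        rw [card_powersetCard, card_univ]
        exact Nat.choose_le_middle _ _

theorem Matrix.exists_linearIndepOn_col_card_eq_rank {K m n : Type*} [Field K] [Fintype n]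
    (A : Matrix m n K) : ∃ S : Finset n, #S = A.rank ∧ LinearIndepOn K A.col (S : Set n) := by
  obtain ⟨b, -, -, hspan, hli⟩ :=
    exists_linearIndepOn_extension (linearIndepOn_empty K A.col) (Set.empty_subset Set.univ)
  have := b.toFinite.fintype
  refine ⟨b.toFinset, ?_, by simpa using hli⟩
  have : Submodule.span K (Set.range A.col) = Submodule.span K (A.col '' b) := by
    refine le_antisymm (Submodule.span_le.2 ?_) (Submodule.span_mono (Set.image_subset_range _ _))
    simpa using hspan
  rw [rank_eq_finrank_span_cols, this, Set.image_eq_range, finrank_span_eq_card hli,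
    Set.toFinset_card]

theorem Matrix.eq_of_mulVec_eq_of_linearIndepOn_col {K m n : Type*} [Field K] [Fintype n]
    {A : Matrix m n K} {S : Finset n} (hS : LinearIndepOn K A.col (S : Set n)) {x y : n → K}
    (hxy : A *ᵥ x = A *ᵥ y) (hout : ∀ i ∉ S, x i = y i) : x = y := by
  have hsum : ∑ i ∈ S, (x - y) i • A.col i = 0 := by
    rw [← sub_eq_zero, ← mulVec_sub, mulVec_eq_sum] at hxy
    simp only [op_smul_eq_smul] at hxy
    rw [← hxy]
    exact sum_subset (subset_univ S) fun i _ hi => by simp [hout i hi]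
  funext i
  by_cases hi : i ∈ S
  · exact sub_eq_zero.1 (linearIndepOn_iff''.1 hS S (x - y) le_rfl
      (fun i hi => sub_eq_zero.2 (hout i hi)) hsum i hi)
  · exact hout i hi

theorem ncard_sign_solutions_eq_card_filter_piFinset {m n ℓ : Type*} [Fintype m] [Fintype n]
    [Fintype ℓ] [DecidableEq n] [DecidableEq ℓ] (A : Matrix m n ℝ) (u : m → ℝ) :
    Set.ncard {X : ℓ → n → ℝ | (∀ j i, X j i = 1 ∨ X j i = -1) ∧ ∑ j, A *ᵥ X j = u} =
      #{g ∈ Fintype.piFinset fun _ : n => Fintype.piFinset fun _ : ℓ => ({1, -1} : Finset ℝ) |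
        A *ᵥ (fun i => ∑ j, g i j) = u} := by
  have hswap := Function.swap_bijective (α := n) (β := ℓ) (γ := fun _ _ => ℝ)
  rw [← Set.ncard_coe_finset, ← Set.ncard_preimage_of_injective_subset_range
    hswap.1 (by simp [hswap.2.range_eq])]
  congr 1
  ext X
  simp only [Set.mem_preimage, Set.mem_ofPred_eq, mem_coe, mem_filter, Fintype.mem_piFinset,
    mem_insert, mem_singleton, ← mulVec_sum, Function.swap, forall_comm (α := ℓ)]
  rw [sum_fn]

theorem stmt_6_general (m n ℓ r : ℕ) (A : Matrix (Fin m) (Fin n) ℝ)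
    (hr : A.rank = r) (u : Fin m → ℝ) :
    (Set.ncard {X : Fin ℓ → Fin n → ℝ |
        (∀ j i, X j i = 1 ∨ X j i = -1) ∧ ∑ j, A.mulVec (X j) = u} : ℝ)
        / 2 ^ (n * ℓ)
      ≤ ((1 / 2 ^ ℓ : ℝ) * (ℓ.choose (ℓ / 2) : ℝ)) ^ r := by
  obtain ⟨S, hSr, hS⟩ := A.exists_linearIndepOn_col_card_eq_rank
  have hcount := card_filter_piFinset_le_pow_mul_pow _ (fun v : Fin ℓ → ℝ => ∑ j, v j)
    (card_filter_sum_eq_le_choose (ι := Fin ℓ)) S (fun x => A *ᵥ x = u)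
    fun x y hx hy => A.eq_of_mulVec_eq_of_linearIndepOn_col hS (hx.trans hy.symm)
  have hsigns : #(Fintype.piFinset fun _ : Fin ℓ => ({1, -1} : Finset ℝ)) = 2 ^ ℓ := by
    simp [card_pair (by norm_num : (1 : ℝ) ≠ -1)]
  have hrn : r ≤ n := hr ▸ A.rank_le_width
  rw [Fintype.card_fin, hsigns, card_compl, Fintype.card_fin, hSr, hr] at hcount
  rw [ncard_sign_solutions_eq_card_filter_piFinset, div_le_iff₀ (by positivity)]
  calc _ ≤ ((ℓ.choose (ℓ / 2) ^ r * (2 ^ ℓ) ^ (n - r) : ℕ) : ℝ) := by exact_mod_cast hcount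
    _ = _ := by
      rw [mul_comm n ℓ, pow_mul, ← Nat.sub_add_cancel hrn, pow_add, Nat.add_sub_cancel]
      push_cast
      rw [mul_pow, one_div, inv_pow]
      field_simp

theorem stmt_6 (m n ℓ r : ℕ) (hmn : m ≤ n) (A : Matrix (Fin m) (Fin n) ℝ)
    (hr : A.rank = r) (u : Fin m → ℝ) :
    (Set.ncard {X : Fin ℓ → Fin n → ℝ |
        (∀ j i, X j i = 1 ∨ X j i = -1) ∧ ∑ j, A.mulVec (X j) = u} : ℝ)
        / 2 ^ (n * ℓ)
      ≤ ((1 / 2 ^ ℓ : ℝ) * (ℓ.choose (ℓ / 2) : ℝ)) ^ r :=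
  stmt_6_general m n ℓ r A hr u
end

section
/- Let a₁,…,aₙ be vectors in ℝ^d that can be partitioned into sets 𝒜₁,…,𝒜_ℓ with ℓ even, where the span of 𝒜ᵢ has dimension rᵢ. Let ε₁,…,εₙ be independent Rademacher variables. Then for every u ∈ ℝ^d, Pr[ε₁a₁ + ⋯ + εₙaₙ = u] ≤ (2^{-ℓ} C(ℓ, ℓ/2))^{(r₁+⋯+r_ℓ)/ℓ}. -/
/-!
Fourier inversion on a finite abelian group `G` bounds the number of sign vectors `σ` with
`∑ ±vᵢ = w` by `|G|⁻¹ ∑_ψ ∏ᵢ |ψ(vᵢ) + ψ(-vᵢ)|`. Hölder's inequality over the `ℓ` blocks bounds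
this by the geometric mean of the block sums `∑_ψ ∏_{i ∈ 𝒜ⱼ} |ψ(vᵢ) + ψ(-vᵢ)|^ℓ`; as `ℓ` is even
these are real `ℓ`-th powers, so each block sum is `|G|` times the number of `ℓ`-tuples of sign
vectors on `𝒜ⱼ` whose coordinatewise sums `cᵢ ∈ [-ℓ, ℓ]` satisfy `∑ cᵢ vᵢ = 0`. If the vectors
indexed by `Bⱼ ⊆ 𝒜ⱼ`, `|Bⱼ| = rⱼ`, admit no small integer relation, the `cᵢ` with `i ∈ Bⱼ` are
forced by the other rows, and each value of `cᵢ` is attained by at most `C(ℓ, ℓ/2)` of the `2^ℓ`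
sign rows.

The real problem is moved to a finite group by mapping the lattice spanned by the `aᵢ` and `u`
to `(ℤ/p)^k`, with `p` so large that the finitely many small combinations stay distinct.
-/

open Finset

def boolSign (b : Bool) : ℤ := bif b then 1 else -1

section SignCount

variable {ι : Type*} [Fintype ι] [DecidableEq ι]

def signCount {G : Type*} [AddCommGroup G] [DecidableEq G] (v : ι → G) (w : G) : ℕ :=
  #{σ : ι → Bool | ∑ i, boolSign (σ i) • v i = w}

lemma signCount_le_signCount {G H : Type*} [AddCommGroup G] [DecidableEq G] [AddCommGroup H]
    [DecidableEq H] {v : ι → G} {w : G} {v' : ι → H} {w' : H}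
    (h : ∀ σ : ι → Bool, ∑ i, boolSign (σ i) • v i = w → ∑ i, boolSign (σ i) • v' i = w') :
    signCount v w ≤ signCount v' w' :=
  card_le_card <| monotone_filter_right _ fun σ _ => h σ

lemma ncard_le_signCount {V : Type*} [AddCommGroup V] [Module ℝ V] [DecidableEq V]
    (a : ι → V) (u : V) :
    {ε : ι → ℝ | (∀ i, ε i = 1 ∨ ε i = -1) ∧ ∑ i, ε i • a i = u}.ncard ≤ signCount a u := by
  have hsub : {ε : ι → ℝ | (∀ i, ε i = 1 ∨ ε i = -1) ∧ ∑ i, ε i • a i = u} ⊆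
      ({σ : ι → Bool | ∑ i, boolSign (σ i) • a i = u} : Finset _).image
        fun σ i => (boolSign (σ i) : ℝ) := by
    rintro ε ⟨hε, hsum⟩
    have hσ : ∀ i, (boolSign (decide (ε i = 1)) : ℝ) = ε i := fun i => by
      rcases hε i with h | h <;> norm_num [h, boolSign]
    refine mem_image.2 ⟨fun i => decide (ε i = 1), mem_filter.2 ⟨mem_univ _, ?_⟩, funext hσ⟩
    simp_rw [← Int.cast_smul_eq_zsmul ℝ, hσ, hsum]
  calc _ ≤ (_ : Set (ι → ℝ)).ncard := Set.ncard_le_ncard hsub (finite_toSet _)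
    _ ≤ signCount a u := by rw [Set.ncard_coe_finset]; exact card_image_le

end SignCount

lemma AddChar.map_sum_eq_prod {A M κ : Type*} [AddCommMonoid A] [CommMonoid M]
    (ψ : AddChar A M) (s : Finset κ) (f : κ → A) : ψ (∑ i ∈ s, f i) = ∏ i ∈ s, ψ (f i) :=
  map_prod ψ.toMonoidHom (fun i => Multiplicative.ofAdd (f i)) s

section Characters

variable {G : Type*} [AddCommGroup G]

lemma sum_map_boolSign_smul (ψ : AddChar G ℂ) (x : G) :
    ∑ b, ψ (boolSign b • x) = ψ x + ψ (-x) := by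
  simp [boolSign]

lemma sum_map_sum_boolSign_smul (ψ : AddChar G ℂ) (x : G) (ℓ : ℕ) :
    ∑ t : Fin ℓ → Bool, ψ ((∑ k, boolSign (t k)) • x) = (ψ x + ψ (-x)) ^ ℓ := by
  simp_rw [sum_smul, AddChar.map_sum_eq_prod]
  rw [← Fintype.prod_sum fun (_ : Fin ℓ) b => ψ (boolSign b • x)]
  simp_rw [sum_map_boolSign_smul]
  rw [prod_const, card_univ, Fintype.card_fin]

variable [Fintype G]

lemma AddChar.map_add_map_neg_eq_ofReal (ψ : AddChar G ℂ) (x : G) :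
    ψ x + ψ (-x) = ((2 * (ψ x).re : ℝ) : ℂ) := by
  rw [AddChar.map_neg_eq_conj, Complex.add_conj]

variable [DecidableEq G] {ι : Type*} [Fintype ι] [DecidableEq ι]

theorem card_filter_sum_mul_card_eq {α : Type*} [Fintype α] (f : ι → α → G) (w : G) :
    (#{x : ι → α | ∑ i, f i (x i) = w} : ℂ) * Fintype.card G =
      ∑ ψ : AddChar G ℂ, (∏ i, ∑ a, ψ (f i a)) * ψ (-w) := by
  calc (#{x : ι → α | ∑ i, f i (x i) = w} : ℂ) * Fintype.card G
      = ∑ x : ι → α, ∑ ψ : AddChar G ℂ, ψ (∑ i, f i (x i) - w) := by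
        simp_rw [AddChar.sum_apply_eq_ite, sub_eq_zero, sum_ite, sum_const_zero, add_zero,
          sum_const, nsmul_eq_mul]
    _ = ∑ ψ : AddChar G ℂ, (∏ i, ∑ a, ψ (f i a)) * ψ (-w) := by
        rw [sum_comm]
        refine sum_congr rfl fun ψ _ => ?_
        simp_rw [Fintype.prod_sum, sum_mul, sub_eq_add_neg, AddChar.map_add_eq_mul,
          AddChar.map_sum_eq_prod]

theorem signCount_mul_card_le (v : ι → G) (w : G) :
    (signCount v w : ℝ) * Fintype.card G ≤ ∑ ψ : AddChar G ℂ, ∏ i, ‖ψ (v i) + ψ (-v i)‖ := by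
  have key := card_filter_sum_mul_card_eq (fun i b => boolSign b • v i) w
  simp_rw [sum_map_boolSign_smul] at key
  calc (signCount v w : ℝ) * Fintype.card G
      = ‖∑ ψ : AddChar G ℂ, (∏ i, (ψ (v i) + ψ (-v i))) * ψ (-w)‖ := by
        rw [← key]; simp [signCount]
    _ ≤ ∑ ψ : AddChar G ℂ, ∏ i, ‖ψ (v i) + ψ (-v i)‖ := by
        refine (norm_sum_le _ _).trans_eq (sum_congr rfl fun ψ _ => ?_)
        rw [norm_mul, AddChar.norm_apply, mul_one, norm_prod]

theorem sum_prod_norm_pow_eq {ℓ : ℕ} (hℓ : Even ℓ) (v : ι → G) :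
    ∑ ψ : AddChar G ℂ, (∏ i, ‖ψ (v i) + ψ (-v i)‖) ^ ℓ =
      Fintype.card G * #{τ : ι → Fin ℓ → Bool | ∑ i, (∑ k, boolSign (τ i k)) • v i = 0} := by
  have key := card_filter_sum_mul_card_eq
    (fun i (t : Fin ℓ → Bool) => (∑ k, boolSign (t k)) • v i) 0
  simp_rw [sum_map_sum_boolSign_smul, neg_zero, AddChar.map_zero_eq_one, mul_one] at key
  apply Complex.ofReal_injective
  push_cast
  rw [mul_comm, key]
  refine sum_congr rfl fun ψ _ => ?_
  rw [← prod_pow]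
  refine Fintype.prod_congr _ _ fun i => ?_
  rw [AddChar.map_add_map_neg_eq_ofReal, Complex.norm_real, Real.norm_eq_abs,
    ← Complex.ofReal_pow, hℓ.pow_abs, Complex.ofReal_pow]

end Characters

section Counting

lemma sum_boolSign_eq {ℓ : ℕ} (t : Fin ℓ → Bool) :
    ∑ k, boolSign (t k) = 2 * #{k | t k} - ℓ := by
  have h : ∀ b, boolSign b = 2 * (if b then 1 else 0) - 1 := by decide
  simp_rw [h, sum_sub_distrib, ← mul_sum, sum_boole, sum_const, card_univ, Fintype.card_fin,
    nsmul_eq_mul, mul_one]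

lemma abs_sum_boolSign_le {ℓ : ℕ} (t : Fin ℓ → Bool) : |∑ k, boolSign (t k)| ≤ ℓ := by
  have h : ∀ b, |boolSign b| = 1 := by decide
  simpa [h] using abs_sum_le_sum_abs (fun k => boolSign (t k)) univ

lemma card_filter_sum_boolSign_eq_le (ℓ : ℕ) (m : ℤ) :
    #{t : Fin ℓ → Bool | ∑ k, boolSign (t k) = m} ≤ ℓ.choose (ℓ / 2) := by
  rcases eq_empty_or_nonempty {t : Fin ℓ → Bool | ∑ k, boolSign (t k) = m} with h | ⟨t₀, ht₀⟩
  · simp [h]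
  calc #{t : Fin ℓ → Bool | ∑ k, boolSign (t k) = m}
      ≤ #(powersetCard #{k | t₀ k} (univ : Finset (Fin ℓ))) := by
        refine card_le_card_of_injOn (fun t => ({k | t k} : Finset (Fin ℓ))) (fun t ht => ?_)
          fun t _ t' _ htt' => funext fun k => by simpa using congrArg (k ∈ ·) htt'
        simp only [coe_filter, mem_filter, mem_univ, true_and, Set.mem_ofPred_eq,
          sum_boolSign_eq] at ht ht₀
        simp only [mem_coe, mem_powersetCard, subset_univ, true_and]
        omega
    _ = ℓ.choose #{k | t₀ k} := by rw [card_powersetCard, card_univ, Fintype.card_fin]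
    _ ≤ ℓ.choose (ℓ / 2) := Nat.choose_le_middle _ _

variable {κ G : Type*} [Fintype κ] [DecidableEq κ] [AddCommGroup G] {ℓ : ℕ} {v : κ → G}
  {B : Finset κ}

lemma sum_boolSign_eq_of_eqOn_compl
    (hB : Set.InjOn (fun c : B → ℤ => ∑ i, c i • v i) {c | ∀ i, |c i| ≤ ℓ})
    {τ τ₀ : κ → Fin ℓ → Bool} (hτ : ∑ i, (∑ k, boolSign (τ i k)) • v i = 0)
    (hτ₀ : ∑ i, (∑ k, boolSign (τ₀ i k)) • v i = 0) (hcompl : ∀ i ∉ B, τ i = τ₀ i) {i : κ}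
    (hi : i ∈ B) : ∑ k, boolSign (τ i k) = ∑ k, boolSign (τ₀ i k) := by
  have hBsum : ∑ i ∈ B, (∑ k, boolSign (τ i k)) • v i =
      ∑ i ∈ B, (∑ k, boolSign (τ₀ i k)) • v i := by
    have hBc : ∑ i ∈ Bᶜ, (∑ k, boolSign (τ i k)) • v i =
        ∑ i ∈ Bᶜ, (∑ k, boolSign (τ₀ i k)) • v i :=
      sum_congr rfl fun i hi => by rw [hcompl i (mem_compl.1 hi)]
    rw [← sum_add_sum_compl B, hBc] at hτ
    rw [← sum_add_sum_compl B] at hτ₀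
    exact add_right_cancel (hτ.trans hτ₀.symm)
  have := hB (x₁ := fun i : B => ∑ k, boolSign (τ i k)) (x₂ := fun i : B => ∑ k, boolSign (τ₀ i k))
    (fun _ => abs_sum_boolSign_le _) (fun _ => abs_sum_boolSign_le _)
    ((sum_coe_sort B _).trans (hBsum.trans (sum_coe_sort B _).symm))
  exact congrFun this ⟨i, hi⟩

theorem card_filter_sum_boolSign_smul_le [DecidableEq G]
    (hB : Set.InjOn (fun c : B → ℤ => ∑ i, c i • v i) {c | ∀ i, |c i| ≤ ℓ}) :
    #{τ : κ → Fin ℓ → Bool | ∑ i, (∑ k, boolSign (τ i k)) • v i = 0} ≤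
      ℓ.choose (ℓ / 2) ^ #B * (2 ^ ℓ) ^ #Bᶜ := by
  set S : Finset (κ → Fin ℓ → Bool) := {τ | ∑ i, (∑ k, boolSign (τ i k)) • v i = 0}
  -- a solution is determined, up to `C(ℓ, ℓ/2) ^ #B` choices, by its rows outside `B`
  have hfibre : ∀ ρ ∈ (univ : Finset (↥Bᶜ → Fin ℓ → Bool)),
      #{τ ∈ S | (fun i : ↥Bᶜ => τ i) = ρ} ≤ ℓ.choose (ℓ / 2) ^ #B := by
    intro ρ _
    rcases eq_empty_or_nonempty {τ ∈ S | (fun i : ↥Bᶜ => τ i) = ρ} with h | ⟨τ₀, hτ₀⟩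
    · simp [h]
    calc #{τ ∈ S | (fun i : ↥Bᶜ => τ i) = ρ}
        ≤ #(Fintype.piFinset fun i => if i ∈ B then
            ({t | ∑ k, boolSign (t k) = ∑ k, boolSign (τ₀ i k)} : Finset (Fin ℓ → Bool))
            else {τ₀ i}) := by
          refine card_le_card fun τ hτ => Fintype.mem_piFinset.2 fun i => ?_
          simp only [S, mem_filter, mem_univ, true_and] at hτ hτ₀
          have hcompl : ∀ i ∉ B, τ i = τ₀ i := fun i hi =>
            congrFun (hτ.2.trans hτ₀.2.symm) ⟨i, mem_compl.2 hi⟩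
          split_ifs with hi
          · simpa using sum_boolSign_eq_of_eqOn_compl hB hτ.1 hτ₀.1 hcompl hi
          · simpa using hcompl i hi
      _ ≤ ∏ i, if i ∈ B then ℓ.choose (ℓ / 2) else 1 := by
          rw [Fintype.card_piFinset]
          refine prod_le_prod' fun i _ => ?_
          split_ifs
          · exact card_filter_sum_boolSign_eq_le ℓ _
          · simp
      _ = ℓ.choose (ℓ / 2) ^ #B := by rw [prod_ite_mem, univ_inter, prod_const]
  calc #S ≤ ℓ.choose (ℓ / 2) ^ #B * #(univ : Finset (↥Bᶜ → Fin ℓ → Bool)) :=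
        card_le_mul_card_image_of_maps_to (fun _ _ => mem_univ _) _ hfibre
    _ = ℓ.choose (ℓ / 2) ^ #B * (2 ^ ℓ) ^ #Bᶜ := by
        simp only [card_univ, Fintype.card_fun, Fintype.card_coe, Fintype.card_bool,
          Fintype.card_fin]

theorem sum_prod_norm_pow_le [Fintype G] [DecidableEq G] (hℓ : Even ℓ)
    (hB : Set.InjOn (fun c : B → ℤ => ∑ i, c i • v i) {c | ∀ i, |c i| ≤ ℓ}) :
    ∑ ψ : AddChar G ℂ, (∏ i, ‖ψ (v i) + ψ (-v i)‖) ^ ℓ ≤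
      Fintype.card G * ((2 ^ ℓ) ^ Fintype.card κ * ((ℓ.choose (ℓ / 2) : ℝ) / 2 ^ ℓ) ^ #B) := by
  rw [sum_prod_norm_pow_eq hℓ]
  gcongr
  calc (#{τ : κ → Fin ℓ → Bool | ∑ i, (∑ k, boolSign (τ i k)) • v i = 0} : ℝ)
      ≤ (ℓ.choose (ℓ / 2) ^ #B * (2 ^ ℓ) ^ #Bᶜ : ℕ) := by
        exact_mod_cast card_filter_sum_boolSign_smul_le hB
    _ = (2 ^ ℓ) ^ Fintype.card κ * ((ℓ.choose (ℓ / 2) : ℝ) / 2 ^ ℓ) ^ #B := by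
        rw [card_compl, div_pow, ← pow_sub_mul_pow _ (card_le_univ B)]
        push_cast
        field_simp

end Counting

section Holder

variable {κ Θ : Type*} [Fintype κ] [Fintype Θ]

lemma prod_le_sum_pow_card_div_card [Nonempty κ] (x : κ → ℝ) (hx : ∀ j, 0 ≤ x j) :
    ∏ j, x j ≤ (∑ j, x j ^ Fintype.card κ) / Fintype.card κ := by
  set m := Fintype.card κ
  have hm : m ≠ 0 := Fintype.card_ne_zero
  have := Real.geom_mean_le_arith_mean_weighted univ (fun _ => (m : ℝ)⁻¹) (fun j => x j ^ m)
    (fun _ _ => by positivity) (by simp [m]) (fun j _ => pow_nonneg (hx j) m)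
  simp_rw [Real.pow_rpow_inv_natCast (hx _) hm, ← mul_sum] at this
  rwa [inv_mul_eq_div] at this

theorem sum_prod_pow_le_prod_sum_pow (g : κ → Θ → ℝ) (hg : ∀ j θ, 0 ≤ g j θ) :
    (∑ θ, ∏ j, g j θ) ^ Fintype.card κ ≤ ∏ j, ∑ θ, g j θ ^ Fintype.card κ := by
  set m := Fintype.card κ
  rcases isEmpty_or_nonempty κ with hκ | hκ
  · simp [m]
  have hm : m ≠ 0 := Fintype.card_ne_zero
  set S := fun j => ∑ θ, g j θ ^ m
  rcases em (∃ j, S j = 0) with ⟨j, hj⟩ | hS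
  · have hgj : ∀ θ, g j θ = 0 := fun θ => (pow_eq_zero_iff hm).1 <|
      (sum_eq_zero_iff_of_nonneg fun θ _ => pow_nonneg (hg j θ) m).1 hj θ (mem_univ θ)
    rw [sum_eq_zero fun θ _ => prod_eq_zero (mem_univ j) (hgj θ), zero_pow hm]
    exact prod_nonneg fun j _ => sum_nonneg fun θ _ => pow_nonneg (hg j θ) m
  have hSpos : ∀ j, 0 < S j := fun j =>
    (sum_nonneg fun θ _ => pow_nonneg (hg j θ) m).lt_of_ne fun h => hS ⟨j, h.symm⟩
  set t := fun j => S j ^ (m⁻¹ : ℝ)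
  have ht : ∀ j, 0 < t j := fun j => Real.rpow_pos_of_pos (hSpos j) _
  have htm : ∀ j, t j ^ m = S j := fun j => Real.rpow_inv_natCast_pow (hSpos j).le hm
  have hnorm : ∑ θ, ∏ j, g j θ / t j ≤ 1 := calc
    ∑ θ, ∏ j, g j θ / t j ≤ ∑ θ, (∑ j, (g j θ / t j) ^ m) / m :=
        sum_le_sum fun θ _ =>
          prod_le_sum_pow_card_div_card _ fun j => div_nonneg (hg j θ) (ht j).le
    _ = (∑ j, S j / t j ^ m) / m := by
        rw [← sum_div, sum_comm]
        simp_rw [div_pow, ← sum_div, S]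
    _ = 1 := by
        simp_rw [htm, div_self (hSpos _).ne', sum_const, card_univ, nsmul_one]
        exact div_self (by positivity)
  have hsum : ∑ θ, ∏ j, g j θ ≤ ∏ j, t j := by
    simpa [prod_div_distrib, ← sum_div, div_le_one (prod_pos fun j _ => ht j)] using hnorm
  calc (∑ θ, ∏ j, g j θ) ^ m ≤ (∏ j, t j) ^ m :=
        pow_le_pow_left₀ (sum_nonneg fun θ _ => prod_nonneg fun j _ => hg j θ) hsum m
    _ = ∏ j, S j := by rw [← prod_pow]; simp_rw [htm]

end Holder

lemma prod_eq_prod_prod_of_cover {ι J M : Type*} [Fintype ι] [Fintype J] [DecidableEq ι]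
    [CommMonoid M] (𝒜 : J → Finset ι) (hdisj : Pairwise fun i j => Disjoint (𝒜 i) (𝒜 j))
    (hcover : ∀ i : ι, ∃ j, i ∈ 𝒜 j) (f : ι → M) :
    ∏ i, f i = ∏ j, ∏ i : 𝒜 j, f i := by
  have huniv : univ.biUnion 𝒜 = univ := eq_univ_of_forall fun i => by simpa using hcover i
  rw [← huniv, prod_biUnion fun j _ j' _ h => hdisj h]
  simp_rw [prod_coe_sort]

theorem signCount_div_pow_le {ι G : Type*} [Fintype ι] [DecidableEq ι] [AddCommGroup G]
    [Fintype G] [DecidableEq G] {ℓ : ℕ} (hℓ : Even ℓ) (𝒜 : Fin ℓ → Finset ι)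
    (hdisj : Pairwise fun i j => Disjoint (𝒜 i) (𝒜 j)) (hcover : ∀ i : ι, ∃ j, i ∈ 𝒜 j)
    (v : ι → G) (w : G) (B : ∀ j, Finset (𝒜 j))
    (hB : ∀ j, Set.InjOn (fun c : B j → ℤ => ∑ i, c i • v i) {c | ∀ i, |c i| ≤ ℓ}) :
    ((signCount v w : ℝ) / 2 ^ Fintype.card ι) ^ ℓ ≤
      ∏ j, ((ℓ.choose (ℓ / 2) : ℝ) / 2 ^ ℓ) ^ #(B j) := by
  set g : Fin ℓ → AddChar G ℂ → ℝ := fun j ψ => ∏ i : 𝒜 j, ‖ψ (v i) + ψ (-v i)‖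
  have h2 : ((2 : ℝ) ^ ℓ) ^ Fintype.card ι = ∏ j, (2 ^ ℓ) ^ Fintype.card (𝒜 j) := by
    simpa using prod_eq_prod_prod_of_cover 𝒜 hdisj hcover fun _ => (2 : ℝ) ^ ℓ
  have key : ((signCount v w : ℝ) * Fintype.card G) ^ ℓ ≤
      (Fintype.card G : ℝ) ^ ℓ * (((2 : ℝ) ^ ℓ) ^ Fintype.card ι *
        ∏ j, ((ℓ.choose (ℓ / 2) : ℝ) / 2 ^ ℓ) ^ #(B j)) := calc
    _ ≤ (∑ ψ : AddChar G ℂ, ∏ j, g j ψ) ^ ℓ := by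
        gcongr
        simpa only [prod_eq_prod_prod_of_cover 𝒜 hdisj hcover] using signCount_mul_card_le v w
    _ ≤ ∏ j, ∑ ψ : AddChar G ℂ, g j ψ ^ ℓ := by
        simpa using sum_prod_pow_le_prod_sum_pow g fun j ψ => by positivity
    _ ≤ ∏ j, (Fintype.card G * ((2 ^ ℓ) ^ Fintype.card (𝒜 j) *
          ((ℓ.choose (ℓ / 2) : ℝ) / 2 ^ ℓ) ^ #(B j))) :=
        prod_le_prod (fun j _ => by positivity) fun j _ => sum_prod_norm_pow_le hℓ (hB j)
    _ = _ := by
        rw [prod_mul_distrib, prod_mul_distrib, prod_const, card_univ, Fintype.card_fin, h2]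
  rw [div_pow, div_le_iff₀ (by positivity), ← pow_mul, mul_comm _ ℓ, pow_mul, mul_comm (∏ _, _)]
  rw [mul_pow, mul_comm _ ((Fintype.card G : ℝ) ^ ℓ)] at key
  exact le_of_mul_le_mul_left key (by positivity)

theorem exists_addMonoidHom_zmod_injOn {M : Type*} [AddCommGroup M] [Module.Free ℤ M]
    [Module.Finite ℤ M] {S : Set M} (hS : S.Finite) :
    ∃ (p : ℕ) (_ : NeZero p) (φ : M →+ (Fin (Module.finrank ℤ M) → ZMod p)), S.InjOn φ := by
  set b := Module.finBasis ℤ M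
  set N := ∑ x ∈ hS.toFinset, ∑ i, (b.repr x i).natAbs
  have hN : ∀ x ∈ S, ∀ i, (b.repr x i).natAbs ≤ N := fun x hx i =>
    (single_le_sum (f := fun i => (b.repr x i).natAbs) (fun _ _ => Nat.zero_le _)
      (mem_univ i)).trans
      (single_le_sum (f := fun x => ∑ i, (b.repr x i).natAbs) (fun _ _ => Nat.zero_le _)
        (hS.mem_toFinset.2 hx))
  -- coordinates of points of `S` differ by less than `p`, so reduction mod `p` separates them
  refine ⟨2 * N + 1, ⟨by omega⟩,
    AddMonoidHom.pi fun i => (Int.castAddHom _).comp (b.coord i).toAddMonoidHom, ?_⟩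
  intro x hx y hy hxy
  refine b.ext_elem fun i => ?_
  have hdvd := (ZMod.intCast_eq_intCast_iff_dvd_sub (b.repr x i) (b.repr y i) (2 * N + 1)).1
    (congrFun hxy i)
  have hsmall : (b.repr y i - b.repr x i).natAbs < 2 * N + 1 := by
    have := Int.natAbs_sub_le (b.repr y i) (b.repr x i)
    have := hN x hx i
    have := hN y hy i
    omega
  have := Int.eq_zero_of_dvd_of_natAbs_lt_natAbs hdvd (by exact_mod_cast hsmall)
  omega

lemma exists_finset_linearIndepOn_card_eq_finrank {K V ι : Type*} [DivisionRing K]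
    [AddCommGroup V] [Module K V] (f : ι → V) (s : Finset ι) :
    ∃ B : Finset s, LinearIndepOn K (fun i : s => f i) B ∧
      #B = Module.finrank K (Submodule.span K (f '' s)) := by
  classical
  obtain ⟨B, -, -, hspan, hB⟩ := exists_linearIndepOn_extension
    (linearIndepOn_empty K fun i : s => f i) (Set.empty_subset Set.univ)
  have : Submodule.span K ((fun i : s => f i) '' B) = Submodule.span K (f '' s) := by
    refine le_antisymm (Submodule.span_mono ?_) (Submodule.span_le.2 ?_)
    · rintro _ ⟨i, -, rfl⟩
      exact ⟨i, i.2, rfl⟩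
    · rintro _ ⟨i, hi, rfl⟩
      exact hspan ⟨⟨i, hi⟩, Set.mem_univ _, rfl⟩
  refine ⟨B.toFinset, by simpa using hB, ?_⟩
  rw [← this, Set.image_eq_range, finrank_span_eq_card hB, Set.toFinset_card]

theorem exists_zmod_signCount_le {ι V J : Type*} [Fintype ι] [DecidableEq ι] [AddCommGroup V]
    [Module ℝ V] [DecidableEq V] [Finite J] {κ : J → Type*} [∀ j, Fintype (κ j)]
    (a : ι → V) (u : V) (f : ∀ j, κ j → ι) (hf : ∀ j, LinearIndependent ℝ (a ∘ f j)) (L : ℕ) :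
    ∃ (k p : ℕ) (_ : NeZero p) (v : ι → Fin k → ZMod p) (w : Fin k → ZMod p),
      signCount a u ≤ signCount v w ∧
        ∀ j, Set.InjOn (fun c : κ j → ℤ => ∑ i, c i • v (f j i)) {c | ∀ i, |c i| ≤ L} := by
  set M := Submodule.span ℤ (insert u (Set.range a))
  have ha : ∀ i, a i ∈ M := fun i => Submodule.subset_span (Set.mem_insert_of_mem _ ⟨i, rfl⟩)
  have hu : u ∈ M := Submodule.subset_span (Set.mem_insert _ _)
  set a' : ι → M := fun i => ⟨a i, ha i⟩
  have : Module.Finite ℤ M := Module.Finite.span_of_finite ℤ ((Set.finite_range a).insert u)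
  have : Module.IsTorsionFree ℤ V := .trans_faithfulSMul ℤ ℝ V
  set comb : ∀ j, (κ j → ℤ) → M := fun j c => ∑ i, c i • a' (f j i)
  have hcomb : ∀ j, Function.Injective (comb j) := fun j =>
    (LinearIndependent.of_comp M.subtype (v := a' ∘ f j)
      ((hf j).restrict_scalars' ℤ)).fintypeLinearCombination_injective
  have hbox : ∀ j, {c : κ j → ℤ | ∀ i, |c i| ≤ L}.Finite := fun j => by
    simpa only [abs_le, ← Set.mem_Icc] using Set.Finite.pi' fun _ => Set.finite_Icc (-(L : ℤ)) L
  obtain ⟨p, hp, φ, hφ⟩ := exists_addMonoidHom_zmod_injOn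
    (Set.finite_iUnion fun j => (hbox j).image (comb j))
  refine ⟨_, p, hp, fun i => φ (a' i), φ ⟨u, hu⟩,
    signCount_le_signCount fun σ hσ => ?_, fun j => ?_⟩
  · have : ∑ i, boolSign (σ i) • a' i = ⟨u, hu⟩ := Subtype.ext (by simpa [a'] using hσ)
    simpa using congrArg φ this
  · have := (hφ.mono (Set.subset_iUnion _ j)).comp (hcomb j).injOn (Set.mapsTo_image _ _)
    simpa [comb, Function.comp_def] using this

lemma le_rpow_div_of_pow_le {x b : ℝ} {m R : ℕ} (hx : 0 ≤ x) (hb : 0 ≤ b) (hm : 0 < m)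
    (h : x ^ m ≤ b ^ R) : x ≤ b ^ ((R : ℝ) / m) := by
  rw [div_eq_mul_inv, Real.rpow_mul hb, Real.rpow_natCast,
    Real.le_rpow_inv_iff_of_pos hx (by positivity) (by positivity), Real.rpow_natCast]
  exact h

theorem stmt_7 (n d ℓ : ℕ) (hℓeven : Even ℓ) (hℓpos : 0 < ℓ)
    (a : Fin n → Fin d → ℝ)
    (𝒜 : Fin ℓ → Finset (Fin n))
    (hdisj : Pairwise fun i j => Disjoint (𝒜 i) (𝒜 j))
    (hcover : ∀ i : Fin n, ∃ j, i ∈ 𝒜 j)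
    (r : Fin ℓ → ℕ)
    (hr : ∀ j, Module.finrank ℝ
      (Submodule.span ℝ (a '' (𝒜 j : Set (Fin n)))) = r j)
    (u : Fin d → ℝ) :
    (Set.ncard {ε : Fin n → ℝ |
        (∀ i, ε i = 1 ∨ ε i = -1) ∧ ∑ i, ε i • a i = u} : ℝ) / 2 ^ n
      ≤ ((1 / 2 ^ ℓ : ℝ) * (ℓ.choose (ℓ / 2) : ℝ)) ^ ((∑ j, r j : ℝ) / ℓ) := by
  classical
  choose B hB hBcard using fun j => exists_finset_linearIndepOn_card_eq_finrank (K := ℝ) a (𝒜 j)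
  obtain ⟨k, p, _, v, w, hcount, hinj⟩ :=
    exists_zmod_signCount_le a u (fun j (i : B j) => (i : Fin n)) hB ℓ
  have hmain := signCount_div_pow_le hℓeven 𝒜 hdisj hcover v w B hinj
  simp_rw [hBcard, hr, prod_pow_eq_pow_sum, Fintype.card_fin] at hmain
  rw [one_div_mul_eq_div, ← Nat.cast_sum]
  refine le_rpow_div_of_pow_le (by positivity) (by positivity) hℓpos (le_trans ?_ hmain)
  gcongr
  exact_mod_cast (ncard_le_signCount a u).trans hcount
end

section
/- Let M be a k×n matrix and let r, ℓ ≥ 2 with r ≤ k. Suppose M has at least (n/k)^k nonsingular k×k submatrices, and suppose (e²ℓ)^k < (n/r)^{k−r}. Then the columns of M can be partitioned so as to contain ℓ pairwise disjoint sets of columns, each of which spans a subspace of dimension at least r (an (r,ℓ)-rank partition). -/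
/-!
Pick pairwise disjoint linearly independent `r`-sets of columns greedily. If this stops before
`ℓ` sets, their union `P` has at most `ℓ r` columns and meets every independent `r`-set, so each
nonsingular `k`-set of columns has fewer than `r` columns outside `P`. There are then at most
`C(ℓ r, k - r + 1) C(n, r - 1)` nonsingular `k × k` minors, and with `k ^ k ≤ e ^ k k!` this is
less than `(n / k) ^ k` once `(e ^ 2 ℓ) ^ k < (n / r) ^ (k - r)`.
-/

open Finset
open scoped Nat

theorem exists_pairwise_disjoint_or_exists_hitting_set {α : Type*} [DecidableEq α]
    (F : Set (Finset α)) {r : ℕ} (hF : ∀ T ∈ F, #T ≤ r) (ℓ : ℕ) :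
    (∃ C : Fin ℓ → Finset α, (Pairwise fun i j => Disjoint (C i) (C j)) ∧ ∀ i, C i ∈ F) ∨
      ∃ P : Finset α, #P ≤ ℓ * r ∧ ∀ T ∈ F, ¬Disjoint T P := by
  induction ℓ with
  | zero => exact Or.inl ⟨Fin.elim0, fun i => i.elim0, fun i => i.elim0⟩
  | succ ℓ ih =>
    rcases ih with ⟨C, hdisj, hC⟩ | ⟨P, hP, hhit⟩
    · by_cases hfree : ∃ T ∈ F, Disjoint T (univ.biUnion C)
      · obtain ⟨T, hT, hTC⟩ := hfree
        have hTCi (i : Fin ℓ) : Disjoint T (C i) :=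
          hTC.mono_right (subset_biUnion_of_mem C (mem_univ i))
        refine Or.inl ⟨Fin.cons T C, ?_, Fin.cases hT hC⟩
        rw [pairwise_fin_succ_iff]
        exact ⟨fun i => by simpa using (hTCi i).symm, fun j => by simpa using hTCi j,
          fun i j hij => by simpa using hdisj hij⟩
      · push Not at hfree
        refine Or.inr ⟨univ.biUnion C, ?_, hfree⟩
        calc #(univ.biUnion C) ≤ ∑ i, #(C i) := card_biUnion_le
          _ ≤ ∑ _i : Fin ℓ, r := sum_le_sum fun i _ => hF _ (hC i)
          _ ≤ (ℓ + 1) * r := by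
            rw [sum_const, card_univ, Fintype.card_fin, smul_eq_mul]
            exact Nat.mul_le_mul_right r ℓ.le_succ
    · exact Or.inr ⟨P, hP.trans (Nat.mul_le_mul_right r ℓ.le_succ), hhit⟩

theorem card_lt_card_inter_add_of_forall_not_disjoint {α : Type*} [DecidableEq α]
    {s P : Finset α} {r : ℕ} (hP : ∀ T ⊆ s, #T = r → ¬Disjoint T P) : #s < #(s ∩ P) + r := by
  have hsdiff : #(s \ P) < r := by
    by_contra! h
    obtain ⟨T, hT, hTr⟩ := exists_subset_card_eq h
    exact hP T (hT.trans sdiff_subset) hTr (sdiff_disjoint.mono_left hT)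
  have := card_inter_add_card_sdiff s P
  omega

theorem card_filter_powersetCard_le_choose_mul_choose {α : Type*} [Fintype α] [DecidableEq α]
    (P : Finset α) (k j : ℕ) :
    #{s ∈ powersetCard k univ | j ≤ #(s ∩ P)} ≤
      (#P).choose j * (Fintype.card α).choose (k - j) := by
  calc #{s ∈ powersetCard k univ | j ≤ #(s ∩ P)}
      ≤ #((powersetCard j P ×ˢ powersetCard (k - j) univ).image fun AB => AB.1 ∪ AB.2) := by
        refine card_le_card fun s hs => ?_
        obtain ⟨hs, hj⟩ := mem_filter.1 hs
        obtain ⟨A, hA, hAj⟩ := exists_subset_card_eq hj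
        have hAs : A ⊆ s := hA.trans inter_subset_left
        refine mem_image.2 ⟨(A, s \ A), ?_, union_sdiff_of_subset hAs⟩
        simp only [mem_product, mem_powersetCard, subset_univ, true_and] at hs ⊢
        exact ⟨⟨hA.trans inter_subset_right, hAj⟩, by rw [card_sdiff_of_subset hAs, hs, hAj]⟩
    _ ≤ #(powersetCard j P ×ˢ powersetCard (k - j) univ) := card_image_le
    _ = (#P).choose j * (Fintype.card α).choose (k - j) := by
        rw [card_product, card_powersetCard, card_powersetCard, card_univ]

theorem Matrix.linearIndepOn_col_of_det_submatrix_ne_zero {m n K : Type*} [Field K] [Fintype m]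
    [DecidableEq m] (M : Matrix m n K) {s : Finset n} (e : m ≃ s)
    (hdet : (M.submatrix id fun i => (e i : n)).det ≠ 0) : LinearIndepOn K M.col (s : Set n) := by
  have hcols : LinearIndependent K (M.submatrix id fun i => (e i : n)).col :=
    Matrix.linearIndependent_cols_iff_isUnit.2 ((isUnit_iff_isUnit_det _).2 hdet.isUnit)
  exact (linearIndependent_equiv e).1 hcols

theorem Matrix.rank_submatrix_eq_card {m n K : Type*} [Field K] [Fintype m] (M : Matrix m n K)
    {T : Finset n} (hT : LinearIndepOn K M.col (T : Set n)) :
    (M.submatrix id fun j : T => j.1).rank = #T := by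
  rw [Matrix.rank_eq_finrank_span_cols]
  exact (finrank_span_eq_card hT).trans (Fintype.card_coe T)

theorem ncard_le_card_filter_powersetCard {α : Type*} [Fintype α] [DecidableEq α] {k : ℕ}
    {S : Set {s : Finset α // #s = k}} {p : Finset α → Prop} [DecidablePred p]
    (h : ∀ s ∈ S, p s.1) : S.ncard ≤ #{s ∈ powersetCard k univ | p s} := by
  rw [← Set.ncard_image_of_injective S Subtype.val_injective, ← Set.ncard_coe_finset]
  refine Set.ncard_le_ncard ?_
  rintro _ ⟨s, hs, rfl⟩
  simp [s.2, h s hs]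

theorem choose_mul_choose_mul_pow_le (a b i j : ℕ) :
    (a.choose i * b.choose j : ℝ) * ((i + j : ℕ) : ℝ) ^ (i + j) ≤
      (2 * Real.exp 1) ^ (i + j) * a ^ i * b ^ j := by
  have hchoose : (a.choose i * b.choose j : ℝ) * (i ! * j !) ≤ a ^ i * b ^ j := by
    have hi := (le_div_iff₀ (by positivity)).1 (Nat.choose_le_pow_div (α := ℝ) i a)
    have hj := (le_div_iff₀ (by positivity)).1 (Nat.choose_le_pow_div (α := ℝ) j b)
    calc (a.choose i * b.choose j : ℝ) * (i ! * j !)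
        = (a.choose i * i ! : ℝ) * (b.choose j * j !) := by ring
      _ ≤ a ^ i * b ^ j := by gcongr
  have hfact : ((i + j : ℕ) : ℝ) ^ (i + j) ≤ (2 * Real.exp 1) ^ (i + j) * (i ! * j !) := by
    have hexp := Real.pow_div_factorial_le_exp (x := ((i + j : ℕ) : ℝ)) (by positivity) (i + j)
    rw [div_le_iff₀ (by positivity), ← Real.exp_one_pow] at hexp
    have htwo : ((i + j) ! : ℝ) ≤ 2 ^ (i + j) * (i ! * j !) := by
      rw [← Nat.add_choose_mul_factorial_mul_factorial, mul_assoc]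
      exact_mod_cast Nat.mul_le_mul_right _ (Nat.choose_le_two_pow _ _)
    calc ((i + j : ℕ) : ℝ) ^ (i + j) ≤ Real.exp 1 ^ (i + j) * (i + j) ! := hexp
      _ ≤ Real.exp 1 ^ (i + j) * (2 ^ (i + j) * (i ! * j !)) := by gcongr
      _ = (2 * Real.exp 1) ^ (i + j) * (i ! * j !) := by ring
  calc (a.choose i * b.choose j : ℝ) * ((i + j : ℕ) : ℝ) ^ (i + j)
      ≤ (a.choose i * b.choose j : ℝ) * ((2 * Real.exp 1) ^ (i + j) * (i ! * j !)) := by gcongr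
    _ = (2 * Real.exp 1) ^ (i + j) * ((a.choose i * b.choose j : ℝ) * (i ! * j !)) := by ring
    _ ≤ (2 * Real.exp 1) ^ (i + j) * (a ^ i * b ^ j) := by gcongr
    _ = _ := by ring

theorem pow_le_pow_of_pow_succ_le {x e L : ℝ} {d k : ℕ} (hx : 0 ≤ x) (he : 2 ≤ e) (hL : 1 ≤ L)
    (hdk : d ≤ k) (hup : x ^ (d + 1) ≤ (2 * e) ^ k * L ^ (d + 1)) : x ^ d ≤ (e ^ 2 * L) ^ k := by
  by_contra! hlow
  have h1 : ((e ^ 2 * L) ^ k) ^ (d + 1) < ((2 * e) ^ k * L ^ (d + 1)) ^ d :=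
    calc ((e ^ 2 * L) ^ k) ^ (d + 1) < (x ^ d) ^ (d + 1) := by gcongr
      _ = (x ^ (d + 1)) ^ d := by ring
      _ ≤ ((2 * e) ^ k * L ^ (d + 1)) ^ d := by gcongr
  have h2 : ((2 * e) ^ k * L ^ (d + 1)) ^ d ≤ ((e ^ 2 * L) ^ k) ^ (d + 1) :=
    calc ((2 * e) ^ k * L ^ (d + 1)) ^ d = (2 * e) ^ (k * d) * L ^ ((d + 1) * d) := by ring
      _ ≤ (e ^ 2) ^ (k * d) * L ^ ((d + 1) * k) := by rw [sq]; gcongr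
      _ ≤ (e ^ 2) ^ (k * (d + 1)) * L ^ ((d + 1) * k) := by
          gcongr
          · nlinarith
          · omega
      _ = ((e ^ 2 * L) ^ k) ^ (d + 1) := by ring
  exact h1.not_ge h2

theorem choose_mul_choose_lt_div_pow {k n r ℓ : ℕ} (hr : 1 ≤ r) (hℓ : 1 ≤ ℓ) (hrk : r ≤ k)
    (hcond : (Real.exp 1 ^ 2 * ℓ) ^ k < ((n : ℝ) / r) ^ (k - r)) :
    ((ℓ * r).choose (k - r + 1) * n.choose (r - 1) : ℝ) < ((n : ℝ) / k) ^ k := by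
  set d := k - r
  have hk : k = (d + 1) + (r - 1) := by omega
  have he : 2 ≤ Real.exp 1 := by linarith [Real.add_one_le_exp (1 : ℝ)]
  have hℓ' : (1 : ℝ) ≤ ℓ := by exact_mod_cast hℓ
  have hr' : (0 : ℝ) < r := by exact_mod_cast hr
  have hn : (0 : ℝ) < n := by
    by_contra! hn
    have hn0 : (n : ℝ) = 0 := le_antisymm hn n.cast_nonneg
    refine (one_le_pow₀ (by nlinarith) : (1 : ℝ) ≤ (Real.exp 1 ^ 2 * ℓ) ^ k).not_gt
      (hcond.trans_le (pow_le_one₀ ?_ ?_)) <;> simp [hn0]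
  by_contra! hbound
  have hnk : (n : ℝ) ^ (d + 1) * n ^ (r - 1) ≤
      ((2 * Real.exp 1) ^ k * ℓ ^ (d + 1) * r ^ (d + 1)) * n ^ (r - 1) := by
    have hchoose := choose_mul_choose_mul_pow_le (ℓ * r) n (d + 1) (r - 1)
    rw [← hk] at hchoose
    calc (n : ℝ) ^ (d + 1) * n ^ (r - 1) = ((n : ℝ) / k) ^ k * k ^ k := by
          rw [← pow_add, ← hk, div_pow, div_mul_cancel₀]
          exact pow_ne_zero _ (by exact_mod_cast (by omega : k ≠ 0))
      _ ≤ ((ℓ * r).choose (d + 1) * n.choose (r - 1) : ℝ) * k ^ k := by gcongr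
      _ ≤ _ := by convert hchoose using 1; push_cast; ring
  have hup : ((n : ℝ) / r) ^ (d + 1) ≤ (2 * Real.exp 1) ^ k * ℓ ^ (d + 1) := by
    rw [div_pow, div_le_iff₀ (by positivity)]
    exact le_of_mul_le_mul_right hnk (by positivity)
  exact (pow_le_pow_of_pow_succ_le (by positivity) he hℓ' (by omega) hup).not_gt hcond

theorem stmt_14 (k n r ℓ : ℕ) (hr2 : 2 ≤ r) (hℓ2 : 2 ≤ ℓ) (hrk : r ≤ k)
    (M : Matrix (Fin k) (Fin n) ℝ)
    (hminors : ((n : ℝ) / k) ^ k ≤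
      (Set.ncard {s : {s : Finset (Fin n) // s.card = k} |
        (M.submatrix id (fun j : Fin k => (s.1.orderIsoOfFin s.2 j : Fin n))).det ≠ 0} : ℝ))
    (hcond : ((Real.exp 1) ^ 2 * ℓ) ^ k < ((n : ℝ) / r) ^ (k - r)) :
    ∃ C : Fin ℓ → Finset (Fin n),
      (Pairwise fun i j => Disjoint (C i) (C j)) ∧
      ∀ i, r ≤ (M.submatrix id (fun j : {x // x ∈ C i} => j.1)).rank := by
  classical
  set F : Set (Finset (Fin n)) := {T | #T = r ∧ LinearIndepOn ℝ M.col (T : Set (Fin n))}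
  obtain ⟨C, hdisj, hC⟩ | ⟨P, hP, hhit⟩ :=
    exists_pairwise_disjoint_or_exists_hitting_set F (fun T hT => hT.1.le) ℓ
  · exact ⟨C, hdisj, fun i => ((M.rank_submatrix_eq_card (hC i).2).trans (hC i).1).ge⟩
  exfalso
  refine (choose_mul_choose_lt_div_pow (by omega) (by omega) hrk hcond).not_ge (hminors.trans ?_)
  have hcount := (card_filter_powersetCard_le_choose_mul_choose P k (k - r + 1)).trans
    (Nat.mul_le_mul_right _ (Nat.choose_le_choose _ hP))
  rw [Fintype.card_fin, show k - (k - r + 1) = r - 1 by omega] at hcount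
  norm_cast
  refine (ncard_le_card_filter_powersetCard fun s hs => ?_).trans hcount
  have hindep := M.linearIndepOn_col_of_det_submatrix_ne_zero (s.1.orderIsoOfFin s.2).toEquiv hs
  have := card_lt_card_inter_add_of_forall_not_disjoint (P := P) (r := r) fun T hT hTr =>
    hhit T ⟨hTr, hindep.mono (coe_subset.2 hT)⟩
  have := s.2
  omega
end
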